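/- Let (D,𝕋) be a trip network with n nodes containing nodes s and t, and let K∈ℕ. Construct (D',𝕋') by adding 2K new nodes y_1,…,y_K,z_1,…,z_K, adding the weight-1 edges (y_i,s) and (t,z_i) for i∈[K], and letting 𝕋' be 𝕋 together with one one-edge trip for each new edge. If (D,𝕋) is not (s,t)-temporalisable, then for every temporalisation τ' of (D',𝕋') the τ'-reachability of (D',𝕋') is at most n²+2nK−1. -/

import Mathlib

/-- A weighted directed edge of a weighted directed multigraph. -/
structure DEdge (V : Type) where
  tail : V
  head : V
  weight : ℝ

/-- A temporal edge: tail, head, starting time and (positive) travel time. -/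
structure TEdge (V : Type) where
  tail : V
  head : V
  time : ℝ
  travel : ℝ

/-- A trip: a nonempty walk, i.e. consecutive edges match head-to-tail. -/
def IsWalk {V : Type} (T : List (DEdge V)) : Prop :=
  T ≠ [] ∧ T.Chain' fun e f => e.head = f.tail

/-- A trip network: every trip is a walk with positive weights, and every node
appears in some trip (the edges of `D` are exactly the edges of the trips). -/
def IsTripNetwork {V : Type} (trips : List (List (DEdge V))) : Prop :=
  (∀ T ∈ trips, IsWalk T ∧ ∀ e ∈ T, 0 < e.weight) ∧
  ∀ v : V, ∃ T ∈ trips, ∃ e ∈ T, e.tail = v ∨ e.head = v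

/-- A temporal path from `u` to `v` in the temporal graph `G`. -/
def IsTemporalPath {V : Type} (G : Set (TEdge V)) (p : List (TEdge V)) (u v : V) : Prop :=
  p ≠ [] ∧ (∀ f ∈ p, f ∈ G) ∧
  (p.Chain' fun e f => e.head = f.tail ∧ e.time + e.travel ≤ f.time) ∧
  p.head?.map TEdge.tail = some u ∧ p.getLast?.map TEdge.head = some v

/-- Temporal reachability (every node temporally reaches itself). -/
def TReachable {V : Type} (G : Set (TEdge V)) (u v : V) : Prop :=
  u = v ∨ ∃ p, IsTemporalPath G p u v

/-- The temporal edges induced by a trip with starting time `t`. -/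
def tripTEdges {V : Type} : List (DEdge V) → ℝ → List (TEdge V)
  | [], _ => []
  | e :: es, t => ⟨e.tail, e.head, t, e.weight⟩ :: tripTEdges es (t + e.weight)

/-- The temporal graph induced by a temporalisation `τ` assigning a starting
time to each trip (index) of the collection. -/
def inducedTG {V : Type} (trips : List (List (DEdge V))) (τ : ℕ → ℝ) : Set (TEdge V) :=
  { f | ∃ i : Fin trips.length, f ∈ tripTEdges (trips.get i) (τ i.1) }

/-- The duration of a trip: the sum of the weights of its edges. -/
def tripDuration {V : Type} (T : List (DEdge V)) : ℝ :=
  (T.map DEdge.weight).sum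

/-- Starting time of the `i`-th trip of a schedule: the sum of the durations of
the previous trips. -/
def scheduleTimes {V : Type} (S : List (List (DEdge V))) (i : ℕ) : ℝ :=
  ((S.take i).map tripDuration).sum

/-- The temporal graph induced by a schedule (an ordering of the trips). -/
def scheduleTG {V : Type} (S : List (List (DEdge V))) : Set (TEdge V) :=
  inducedTG S (scheduleTimes S)

/-- The number of ordered pairs `(u, v)` of nodes such that `v` is temporally
reachable from `u` in `G`. -/
noncomputable def reachCount {V : Type} [Fintype V] (G : Set (TEdge V)) : ℕ :=
  Nat.card {p : V × V // TReachable G p.1 p.2}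

/-- `(s,t)`-temporalisability. -/
def Temporalisable {V : Type} (trips : List (List (DEdge V))) (s t : V) : Prop :=
  ∃ τ : ℕ → ℝ, TReachable (inducedTG trips τ) s t

/-- Strong temporalisability. -/
def StronglyTemporalisable {V : Type} (trips : List (List (DEdge V))) : Prop :=
  ∀ s t : V, Temporalisable trips s t

/-- The sequence of nodes visited by a trip. -/
def tripNodes {V : Type} (T : List (DEdge V)) : List V :=
  T.map DEdge.tail ++ (T.getLast?.map DEdge.head).toList

/-- A symmetric trip collection: the trips can be grouped into disjoint pairs
`(T, T̄)` where `T̄` visits the same nodes as `T` in reverse order. -/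
def IsSymmetricTrips {V : Type} (trips : List (List (DEdge V))) : Prop :=
  ∃ ps : List (List (DEdge V) × List (DEdge V)),
    trips.Perm (ps.flatMap fun p => [p.1, p.2]) ∧
    ∀ p ∈ ps, tripNodes p.2 = (tripNodes p.1).reverse

/-- Reachability by a walk in the underlying multidigraph. -/
def DReachable {V : Type} (trips : List (List (DEdge V))) (u v : V) : Prop :=
  Relation.ReflTransGen (fun a b => ∃ T ∈ trips, ∃ e ∈ T, e.tail = a ∧ e.head = b) u v

/-- Relabel the endpoints of an edge. -/
def liftEdge {V W : Type} (φ : V → W) (e : DEdge V) : DEdge W :=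
  ⟨φ e.tail, φ e.head, e.weight⟩

/-- The extended trip network of the gap reduction for `MRTT`: `2K` new nodes
`y_1, …, y_K` (left) and `z_1, …, z_K` (right) are added, together with the
weight-1 edges `(y_i, s)` and `(t, z_i)` and the corresponding one-edge trips. -/
def extTrips {V : Type} (trips : List (List (DEdge V))) (K : ℕ) (s t : V) :
    List (List (DEdge (V ⊕ (Fin K ⊕ Fin K)))) :=
  trips.map (List.map (liftEdge Sum.inl))
    ++ ((List.finRange K).map fun i =>
        [(⟨Sum.inr (Sum.inl i), Sum.inl s, 1⟩ : DEdge (V ⊕ (Fin K ⊕ Fin K)))])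
    ++ ((List.finRange K).map fun i =>
        [(⟨Sum.inl t, Sum.inr (Sum.inr i), 1⟩ : DEdge (V ⊕ (Fin K ⊕ Fin K)))])

section Aux

/-- Relabel a temporal edge. -/
def liftT {V W : Type} (φ : V → W) (g : TEdge V) : TEdge W :=
  ⟨φ g.tail, φ g.head, g.time, g.travel⟩

lemma tripTEdges_map {V W : Type} (φ : V → W) :
    ∀ (T : List (DEdge V)) (x : ℝ),
      tripTEdges (T.map (liftEdge φ)) x = (tripTEdges T x).map (liftT φ)
  | [], _ => rfl
  | e :: es, x => by
    simp [tripTEdges, liftEdge, liftT, tripTEdges_map φ es (x + e.weight)]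

variable {V : Type} {trips : List (List (DEdge V))} {K : ℕ} {s t : V} {τ' : ℕ → ℝ}

lemma ext_class {f : TEdge (V ⊕ (Fin K ⊕ Fin K))}
    (hf : f ∈ inducedTG (extTrips trips K s t) τ') :
    (∃ g ∈ inducedTG trips τ', f = liftT Sum.inl g) ∨
    (∃ i : Fin K, f.tail = Sum.inr (Sum.inl i) ∧ f.head = Sum.inl s) ∨
    (∃ j : Fin K, f.tail = Sum.inl t ∧ f.head = Sum.inr (Sum.inr j)) := by
  obtain ⟨i, hi⟩ := hf
  rw [List.get_eq_getElem] at hi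
  have hlen := i.2
  have hlen' : (extTrips trips K s t).length = trips.length + K + K := by
    simp [extTrips]; omega
  by_cases h1 : (i : ℕ) < trips.length
  · left
    have hget : (extTrips trips K s t)[(i : ℕ)] = (trips[(i : ℕ)]'h1).map (liftEdge Sum.inl) := by
      simp only [extTrips]
      rw [List.getElem_append_left, List.getElem_append_left, List.getElem_map]
      all_goals (simp only [List.length_append, List.length_map, List.length_finRange]; omega)
    rw [hget, tripTEdges_map] at hi
    obtain ⟨g, hg, rfl⟩ := List.mem_map.mp hi
    exact ⟨g, ⟨⟨i, h1⟩, by simpa using hg⟩, rfl⟩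
  · by_cases h2 : (i : ℕ) < trips.length + K
    · right; left
      have hget : ∃ i' : Fin K, (extTrips trips K s t)[(i : ℕ)] =
          [(⟨Sum.inr (Sum.inl i'), Sum.inl s, 1⟩ : DEdge (V ⊕ (Fin K ⊕ Fin K)))] := by
        simp only [extTrips]
        rw [List.getElem_append_left, List.getElem_append_right, List.getElem_map]
        · exact ⟨_, rfl⟩
        all_goals (simp only [List.length_append, List.length_map, List.length_finRange]; omega)
      obtain ⟨i', hget⟩ := hget
      rw [hget] at hi
      simp only [tripTEdges, List.mem_singleton] at hi
      subst hi
      exact ⟨i', rfl, rfl⟩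
    · right; right
      have hget : ∃ j' : Fin K, (extTrips trips K s t)[(i : ℕ)] =
          [(⟨Sum.inl t, Sum.inr (Sum.inr j'), 1⟩ : DEdge (V ⊕ (Fin K ⊕ Fin K)))] := by
        simp only [extTrips]
        rw [List.getElem_append_right, List.getElem_map]
        · exact ⟨_, rfl⟩
        all_goals (simp only [List.length_append, List.length_map, List.length_finRange]; omega)
      obtain ⟨j', hget⟩ := hget
      rw [hget] at hi
      simp only [tripTEdges, List.mem_singleton] at hi
      subst hi
      exact ⟨j', rfl, rfl⟩

lemma inl_path :
    ∀ (p : List (TEdge (V ⊕ (Fin K ⊕ Fin K)))), p ≠ [] →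
      (∀ f ∈ p, f ∈ inducedTG (extTrips trips K s t) τ') →
      (p.Chain' fun e f => e.head = f.tail ∧ e.time + e.travel ≤ f.time) →
      ∀ u v : V, p.head?.map TEdge.tail = some (Sum.inl u) →
        p.getLast?.map TEdge.head = some (Sum.inl v) →
        ∃ q : List (TEdge V), IsTemporalPath (inducedTG trips τ') q u v ∧
          q.head?.map TEdge.time = p.head?.map TEdge.time := by
  intro p
  induction p with
  | nil => intro h; exact absurd rfl h
  | cons f rest IH =>
    intro _ hmem hch u v hu hv
    have hf := hmem f List.mem_cons_self
    rcases ext_class hf with ⟨g, hg, rfl⟩ | ⟨i, hti, _⟩ | ⟨j, htj, hhj⟩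
    case cons.inr.inl =>
      rw [show f.tail = Sum.inl u by simpa using hu] at hti
      exact absurd hti (by simp)
    case cons.inr.inr =>
      cases rest with
      | nil =>
        rw [show f.head = Sum.inl v by simpa using hv] at hhj
        exact absurd hhj (by simp)
      | cons r rs =>
        obtain ⟨⟨hht, _⟩, _⟩ := List.isChain_cons_cons.mp hch
        rw [hhj] at hht
        rcases ext_class (hmem r (List.mem_cons_of_mem _ List.mem_cons_self)) with
          ⟨g, _, rfl⟩ | ⟨i', hti', _⟩ | ⟨j', htj', _⟩
        · exact absurd hht.symm (by simp [liftT])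
        · rw [hti'] at hht; exact absurd hht (by simp)
        · rw [htj'] at hht; exact absurd hht (by simp)
    · have hu' : g.tail = u := by
        simp only [List.head?_cons, Option.map_some] at hu
        simpa [liftT] using hu
      cases rest with
      | nil =>
        have hv' : g.head = v := by
          simp only [List.getLast?_singleton, Option.map_some] at hv
          simpa [liftT] using hv
        refine ⟨[g], ⟨by simp, by simpa using hg, List.isChain_singleton _,
          by simp [hu'], by simp [hv']⟩, by simp [liftT]⟩
      | cons r rs =>
        obtain ⟨⟨hht, htime⟩, hchtail⟩ := List.isChain_cons_cons.mp hch
        obtain ⟨q, hq, htq⟩ := IH (by simp)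
          (fun x hx => hmem x (List.mem_cons_of_mem _ hx)) hchtail g.head v
          (by simp [← hht, liftT]) (by rw [← hv, List.getLast?_cons_cons])
        obtain ⟨hqne, hqmem, hqch, hqhd, hqlast⟩ := hq
        cases q with
        | nil => exact absurd rfl hqne
        | cons q0 qs =>
          have hq0t : q0.tail = g.head := by simpa using hqhd
          have hq0time : q0.time = r.time := by simpa using htq
          refine ⟨g :: q0 :: qs, ⟨by simp, ?_, ?_, by simp [hu'], ?_⟩, by simp [liftT]⟩
          · intro x hx
            rcases List.mem_cons.mp hx with rfl | hx
            · exact hg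
            · exact hqmem x hx
          · exact List.isChain_cons_cons.mpr ⟨⟨hq0t.symm, by
              simp only [liftT] at htime; rw [hq0time]; exact htime⟩, hqch⟩
          · rw [List.getLast?_cons_cons]; exact hqlast

lemma front_strip {p : List (TEdge (V ⊕ (Fin K ⊕ Fin K)))} {i : Fin K}
    {b : V ⊕ (Fin K ⊕ Fin K)}
    (hp : IsTemporalPath (inducedTG (extTrips trips K s t) τ') p (Sum.inr (Sum.inl i)) b) :
    b = Sum.inl s ∨
      ∃ q, IsTemporalPath (inducedTG (extTrips trips K s t) τ') q (Sum.inl s) b := by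
  obtain ⟨hne, hmem, hch, hhd, hlast⟩ := hp
  cases p with
  | nil => exact absurd rfl hne
  | cons f rest =>
    have hf := hmem f List.mem_cons_self
    have hft : f.tail = Sum.inr (Sum.inl i) := by simpa using hhd
    rcases ext_class hf with ⟨g, hg, rfl⟩ | ⟨i', _, hfh⟩ | ⟨j, htj, hhj⟩
    · simp [liftT] at hft
    · cases rest with
      | nil => left; rw [← hfh]; simpa using hlast.symm
      | cons r rs =>
        right
        obtain ⟨⟨hht, _⟩, hchtail⟩ := List.isChain_cons_cons.mp hch
        refine ⟨r :: rs, by simp, fun x hx => hmem x (List.mem_cons_of_mem _ hx), hchtail,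
          by simp [← hht, hfh], by rw [← hlast, List.getLast?_cons_cons]⟩
    · rw [htj] at hft; exact absurd hft (by simp)

lemma back_strip :
    ∀ (p : List (TEdge (V ⊕ (Fin K ⊕ Fin K)))) (a : V ⊕ (Fin K ⊕ Fin K)) (j : Fin K),
      IsTemporalPath (inducedTG (extTrips trips K s t) τ') p a (Sum.inr (Sum.inr j)) →
      a = Sum.inl t ∨
        ∃ q, IsTemporalPath (inducedTG (extTrips trips K s t) τ') q a (Sum.inl t) ∧
          q.head?.map TEdge.time = p.head?.map TEdge.time := by
  intro p
  induction p with
  | nil => intro a j hp; exact absurd rfl hp.1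
  | cons f rest IH =>
    intro a j hp
    obtain ⟨hne, hmem, hch, hhd, hlast⟩ := hp
    have hf := hmem f List.mem_cons_self
    have hft : f.tail = a := by simpa using hhd
    cases rest with
    | nil =>
      have hfh : f.head = Sum.inr (Sum.inr j) := by simpa using hlast
      rcases ext_class hf with ⟨g, hg, rfl⟩ | ⟨i', _, hfh'⟩ | ⟨j', htj, hhj⟩
      · simp [liftT] at hfh
      · rw [hfh'] at hfh; exact absurd hfh (by simp)
      · left; rw [← hft, htj]
    | cons r rs =>
      obtain ⟨⟨hht, htime⟩, hchtail⟩ := List.isChain_cons_cons.mp hch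
      have hrest : IsTemporalPath (inducedTG (extTrips trips K s t) τ') (r :: rs)
          f.head (Sum.inr (Sum.inr j)) :=
        ⟨by simp, fun x hx => hmem x (List.mem_cons_of_mem _ hx), hchtail,
          by simp [← hht], by rw [← hlast, List.getLast?_cons_cons]⟩
      rcases IH f.head j hrest with hl | ⟨q, hq, htq⟩
      · right
        exact ⟨[f], ⟨by simp, by simpa using hf, List.isChain_singleton _, by simp [hft], by simp [hl]⟩,
          by simp⟩
      · right
        obtain ⟨hqne, hqmem, hqch, hqhd, hqlast⟩ := hq
        cases q with
        | nil => exact absurd rfl hqne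
        | cons q0 qs =>
          have hq0t : q0.tail = f.head := by simpa using hqhd
          have hq0time : q0.time = r.time := by simpa using htq
          refine ⟨f :: q0 :: qs, ⟨by simp, ?_, ?_, by simp [hft], ?_⟩, by simp⟩
          · intro x hx
            rcases List.mem_cons.mp hx with rfl | hx
            · exact hf
            · exact hqmem x hx
          · exact List.isChain_cons_cons.mpr ⟨⟨hq0t.symm, by rw [hq0time]; exact htime⟩, hqch⟩
          · rw [List.getLast?_cons_cons]; exact hqlast

lemma reach_char (hne : ¬ TReachable (inducedTG trips τ') s t) (hst : s ≠ t)
    {a b : V ⊕ (Fin K ⊕ Fin K)}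
    (hr : TReachable (inducedTG (extTrips trips K s t) τ') a b) :
    a = b ∨
    (∃ u v : V, a = Sum.inl u ∧ b = Sum.inl v ∧ ¬(u = s ∧ v = t)) ∨
    (∃ (i : Fin K) (v : V), a = Sum.inr (Sum.inl i) ∧ b = Sum.inl v ∧ v ≠ t) ∨
    (∃ (u : V) (j : Fin K), a = Sum.inl u ∧ b = Sum.inr (Sum.inr j) ∧ u ≠ s) := by
  have inlReach : ∀ (p : List (TEdge (V ⊕ (Fin K ⊕ Fin K)))) (u v : V),
      IsTemporalPath (inducedTG (extTrips trips K s t) τ') p (Sum.inl u) (Sum.inl v) →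
      TReachable (inducedTG trips τ') u v := by
    intro p u v hp
    obtain ⟨hpne, hpmem, hpch, hphd, hplast⟩ := hp
    obtain ⟨q, hq, -⟩ := inl_path p hpne hpmem hpch u v hphd hplast
    exact Or.inr ⟨q, hq⟩
  rcases hr with rfl | ⟨p, hp⟩
  · exact Or.inl rfl
  -- shape of a
  have hashape : (∃ u : V, a = Sum.inl u) ∨ (∃ i : Fin K, a = Sum.inr (Sum.inl i)) := by
    obtain ⟨hne', hmem, hch, hhd, hlast⟩ := hp
    cases p with
    | nil => exact absurd rfl hne'
    | cons f rest =>
      have hft : f.tail = a := by simpa using hhd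
      rcases ext_class (hmem f List.mem_cons_self) with ⟨g, _, rfl⟩ | ⟨i, hti, _⟩ | ⟨j, htj, _⟩
      · exact Or.inl ⟨g.tail, by rw [← hft]; rfl⟩
      · exact Or.inr ⟨i, by rw [← hft, hti]⟩
      · exact Or.inl ⟨t, by rw [← hft, htj]⟩
  have hbshape : (∃ v : V, b = Sum.inl v) ∨ (∃ j : Fin K, b = Sum.inr (Sum.inr j)) := by
    obtain ⟨hne', hmem, hch, hhd, hlast⟩ := hp
    have hlm := List.getLast_mem hne'
    rw [List.getLast?_eq_getLast hne'] at hlast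
    have hlh : (p.getLast hne').head = b := by simpa using hlast
    rcases ext_class (hmem _ hlm) with ⟨g, _, heq⟩ | ⟨i, _, hh⟩ | ⟨j, _, hh⟩
    · exact Or.inl ⟨g.head, by rw [← hlh, heq]; rfl⟩
    · exact Or.inl ⟨s, by rw [← hlh, hh]⟩
    · exact Or.inr ⟨j, by rw [← hlh, hh]⟩
  rcases hashape with ⟨u, rfl⟩ | ⟨i, rfl⟩ <;> rcases hbshape with ⟨v, rfl⟩ | ⟨j, rfl⟩
  · -- inl u → inl v
    have := inlReach p u v hp
    refine Or.inr (Or.inl ⟨u, v, rfl, rfl, ?_⟩)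
    rintro ⟨rfl, rfl⟩; exact hne this
  · -- inl u → inr inr j
    rcases back_strip p (Sum.inl u) j hp with hl | ⟨q, hq, -⟩
    · refine Or.inr (Or.inr (Or.inr ⟨u, j, rfl, rfl, ?_⟩))
      rintro rfl
      exact hst (Sum.inl_injective hl)
    · have := inlReach q u t hq
      refine Or.inr (Or.inr (Or.inr ⟨u, j, rfl, rfl, ?_⟩))
      rintro rfl; exact hne this
  · -- inr inl i → inl v
    rcases front_strip hp with hl | ⟨q, hq⟩
    · refine Or.inr (Or.inr (Or.inl ⟨i, v, rfl, rfl, ?_⟩))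
      rintro rfl
      exact hst (Sum.inl_injective hl.symm)
    · have := inlReach q s v hq
      refine Or.inr (Or.inr (Or.inl ⟨i, v, rfl, rfl, ?_⟩))
      rintro rfl; exact hne this
  · -- inr inl i → inr inr j : impossible
    exfalso
    rcases front_strip hp with hl | ⟨q, hq⟩
    · exact (by simp at hl)
    · rcases back_strip q (Sum.inl s) j hq with hl | ⟨q', hq', -⟩
      · exact hst (Sum.inl_injective hl)
      · exact hne (inlReach q' s t hq')


end Aux

/-- If `(D,𝕋)` is not `(s,t)`-temporalisable then every
temporalisation of the extended trip network has reachability at most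
`n² + 2nK − 1`. -/
theorem extended_reachability_of_not_temporalisable
    {V : Type} [Fintype V] (trips : List (List (DEdge V)))
    (hN : IsTripNetwork trips) (s t : V) (K : ℕ)
    (h : ¬ Temporalisable trips s t) :
    ∀ τ' : ℕ → ℝ,
      (reachCount (inducedTG (extTrips trips K s t) τ') : ℤ) ≤
        (Fintype.card V : ℤ) ^ 2 + 2 * (Fintype.card V : ℤ) * K - 1 := by
  intro τ'
  classical
  have hst : s ≠ t := fun hst => h ⟨τ', Or.inl hst⟩
  have hne : ¬ TReachable (inducedTG trips τ') s t := fun hr => h ⟨τ', hr⟩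
  set G := inducedTG (extTrips trips K s t) τ' with hG
  set n := Fintype.card V with hn
  have hn1 : 1 ≤ n := Fintype.card_pos_iff.mpr ⟨s⟩
  let A : Finset ((V ⊕ (Fin K ⊕ Fin K)) × (V ⊕ (Fin K ⊕ Fin K))) :=
    (Finset.univ.erase (s, t)).image fun q : V × V => (Sum.inl q.1, Sum.inl q.2)
  let B : Finset ((V ⊕ (Fin K ⊕ Fin K)) × (V ⊕ (Fin K ⊕ Fin K))) :=
    (Finset.univ ×ˢ Finset.univ.erase t).image
      fun q : Fin K × V => (Sum.inr (Sum.inl q.1), Sum.inl q.2)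
  let C : Finset ((V ⊕ (Fin K ⊕ Fin K)) × (V ⊕ (Fin K ⊕ Fin K))) :=
    (Finset.univ.erase s ×ˢ Finset.univ).image
      fun q : V × Fin K => (Sum.inl q.1, Sum.inr (Sum.inr q.2))
  let D : Finset ((V ⊕ (Fin K ⊕ Fin K)) × (V ⊕ (Fin K ⊕ Fin K))) :=
    Finset.univ.image fun x : Fin K ⊕ Fin K => (Sum.inr x, Sum.inr x)
  let S := A ∪ B ∪ C ∪ D
  have hS : ∀ pr : (V ⊕ (Fin K ⊕ Fin K)) × (V ⊕ (Fin K ⊕ Fin K)),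
      TReachable G pr.1 pr.2 → pr ∈ S := by
    rintro ⟨a, b⟩ hr
    change TReachable G a b at hr
    simp only [S, Finset.mem_union]
    rcases reach_char hne hst hr with rfl | ⟨u, v, rfl, rfl, huv⟩ |
      ⟨i, v, rfl, rfl, hv⟩ | ⟨u, j, rfl, rfl, hu⟩
    · cases a with
      | inl u =>
        refine Or.inl (Or.inl (Or.inl (Finset.mem_image.mpr ⟨(u, u), ?_, rfl⟩)))
        refine Finset.mem_erase.mpr ⟨?_, Finset.mem_univ _⟩
        rintro hq
        rw [Prod.mk.injEq] at hq
        exact hst (hq.1.symm.trans hq.2)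
      | inr x =>
        exact Or.inr (Finset.mem_image.mpr ⟨x, Finset.mem_univ _, rfl⟩)
    · refine Or.inl (Or.inl (Or.inl (Finset.mem_image.mpr ⟨(u, v), ?_, rfl⟩)))
      refine Finset.mem_erase.mpr ⟨?_, Finset.mem_univ _⟩
      rintro hq
      rw [Prod.mk.injEq] at hq
      exact huv ⟨hq.1, hq.2⟩
    · refine Or.inl (Or.inl (Or.inr (Finset.mem_image.mpr ⟨(i, v), ?_, rfl⟩)))
      exact Finset.mem_product.mpr ⟨Finset.mem_univ _, Finset.mem_erase.mpr ⟨hv, Finset.mem_univ _⟩⟩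
    · refine Or.inl (Or.inr (Finset.mem_image.mpr ⟨(u, j), ?_, rfl⟩))
      exact Finset.mem_product.mpr ⟨Finset.mem_erase.mpr ⟨hu, Finset.mem_univ _⟩, Finset.mem_univ _⟩
  have hcount : reachCount G ≤ S.card := by
    rw [reachCount]
    have hinj : Function.Injective
        (fun x : {pr : ((V ⊕ (Fin K ⊕ Fin K)) × (V ⊕ (Fin K ⊕ Fin K))) // TReachable G pr.1 pr.2} =>
          (⟨x.1, hS x.1 x.2⟩ : {y // y ∈ S})) := by
      intro x y hxy
      exact Subtype.ext (Subtype.mk_eq_mk.mp hxy)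
    have hle := Nat.card_le_card_of_injective _ hinj
    rwa [Nat.card_eq_finsetCard] at hle
  have hinjA : Function.Injective fun q : V × V =>
      ((Sum.inl q.1, Sum.inl q.2) : (V ⊕ (Fin K ⊕ Fin K)) × (V ⊕ (Fin K ⊕ Fin K))) := by
    intro x y hxy
    simp only [Prod.mk.injEq, Sum.inl.injEq] at hxy
    exact Prod.ext hxy.1 hxy.2
  have hinjB : Function.Injective fun q : Fin K × V =>
      ((Sum.inr (Sum.inl q.1), Sum.inl q.2) : (V ⊕ (Fin K ⊕ Fin K)) × (V ⊕ (Fin K ⊕ Fin K))) := by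
    intro x y hxy
    simp only [Prod.mk.injEq, Sum.inl.injEq, Sum.inr.injEq] at hxy
    exact Prod.ext hxy.1 hxy.2
  have hinjC : Function.Injective fun q : V × Fin K =>
      ((Sum.inl q.1, Sum.inr (Sum.inr q.2)) : (V ⊕ (Fin K ⊕ Fin K)) × (V ⊕ (Fin K ⊕ Fin K))) := by
    intro x y hxy
    simp only [Prod.mk.injEq, Sum.inl.injEq, Sum.inr.injEq] at hxy
    exact Prod.ext hxy.1 hxy.2
  have hinjD : Function.Injective fun x : Fin K ⊕ Fin K =>
      ((Sum.inr x, Sum.inr x) : (V ⊕ (Fin K ⊕ Fin K)) × (V ⊕ (Fin K ⊕ Fin K))) := by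
    intro x y hxy
    simp only [Prod.mk.injEq, Sum.inr.injEq] at hxy
    exact hxy.1
  have hcA : A.card = n * n - 1 := by
    rw [Finset.card_image_of_injective _ hinjA,
      Finset.card_erase_of_mem (Finset.mem_univ _), Finset.card_univ, Fintype.card_prod]
  have hcB : B.card = K * (n - 1) := by
    rw [Finset.card_image_of_injective _ hinjB, Finset.card_product,
      Finset.card_erase_of_mem (Finset.mem_univ _), Finset.card_univ, Finset.card_univ,
      Fintype.card_fin]
  have hcC : C.card = (n - 1) * K := by
    rw [Finset.card_image_of_injective _ hinjC, Finset.card_product,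
      Finset.card_erase_of_mem (Finset.mem_univ _), Finset.card_univ, Finset.card_univ,
      Fintype.card_fin]
  have hcD : D.card = K + K := by
    rw [Finset.card_image_of_injective _ hinjD, Finset.card_univ, Fintype.card_sum,
      Fintype.card_fin]
  have hScard : S.card ≤ (n * n - 1) + K * (n - 1) + (n - 1) * K + (K + K) := by
    calc S.card ≤ (A ∪ B ∪ C).card + D.card := Finset.card_union_le _ _
      _ ≤ (A ∪ B).card + C.card + D.card := by
          exact Nat.add_le_add_right (Finset.card_union_le _ _) _
      _ ≤ A.card + B.card + C.card + D.card := by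
          exact Nat.add_le_add_right (Nat.add_le_add_right (Finset.card_union_le _ _) _) _
      _ = (n * n - 1) + K * (n - 1) + (n - 1) * K + (K + K) := by
          rw [hcA, hcB, hcC, hcD]
  have hfin : (reachCount G : ℤ) ≤ (((n * n - 1) + K * (n - 1) + (n - 1) * K + (K + K) : ℕ) : ℤ) :=
    Int.ofNat_le.mpr (le_trans hcount hScard)
  have hnn : 1 ≤ n * n := Nat.one_le_iff_ne_zero.mpr (by positivity)
  calc (reachCount G : ℤ) ≤ (((n * n - 1) + K * (n - 1) + (n - 1) * K + (K + K) : ℕ) : ℤ) := hfin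
    _ = (n : ℤ) ^ 2 + 2 * (n : ℤ) * K - 1 := by
        push_cast [Nat.cast_sub hnn, Nat.cast_sub hn1]
        ring
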